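/- arXiv:2004.00469 — 4 statements merged into one kernel-verified Lean document; each statement's English description precedes it below -/
import Mathlib

section
/- (Weak law of large numbers for incremental sums.) Let X_k(m) be real random variables, independent in k, integrable, with E[X_k(m)] = 0 for all k and m > 0. Assume: (W1) for every ε > 0, sup_k P(|X_k(m)| > ε) → 0 as m → ∞; (W2) lim_{A→∞} sup_{k,m} E[|X_k(m)| · 1{|X_k(m)| > A}] = 0. Then for any positive mass sequence m with ∑ m_k = ∞, setting S_n = ∑_{k=1}^n (m_k / M_n) X_k(m_k), we have S_n → 0 in probability. -/
/-!
Truncate every summand at a level `A` given by (W2). The remainders have `L¹` norm at most the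
(W2) tolerance, uniformly in `k`, so Markov's inequality controls their weighted sum; since the
summands are centred, the same bound controls the means of the truncated parts. The weighted sum
of the truncated parts is then handled by Chebyshev's inequality: its variance is at most
`∑ (m k / M n)² E[cutoff A (X k (m k))²]`, and this tends to `0` because, by (W1), the second
moments of the truncations tend to `0` uniformly in `k` as the mass grows, while the summands with
small mass carry total weight `O(1 / M n)`.
-/

open MeasureTheory ProbabilityTheory Filter
open scoped ENNReal Topology BigOperators

noncomputable section

/-- Partial sums of the masses: `Mpart m n = ∑_{k=1}^n m k`. -/
def Mpart (m : ℕ → ℝ) (n : ℕ) : ℝ := ∑ k ∈ Finset.Icc 1 n, m k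

open Finset

lemma tendsto_zero_of_forall_le_add {α : Type*} {l : Filter α} {f : α → ℝ}
    (hf : ∀ x, 0 ≤ f x)
    (h : ∀ η > 0, ∃ g : α → ℝ, Tendsto g l (𝓝 0) ∧ ∀ x, f x ≤ η + g x) :
    Tendsto f l (𝓝 0) := by
  refine tendsto_order.2 ⟨fun a ha => Eventually.of_forall fun x => ha.trans_le (hf x),
    fun b hb => ?_⟩
  obtain ⟨g, hg, hfg⟩ := h (b / 2) (half_pos hb)
  filter_upwards [hg.eventually (gt_mem_nhds (half_pos hb))] with x hx
  linarith [hfg x]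

lemma sum_mul_le_of_sum_le_one {ι : Type*} {s : Finset ι} {w a : ι → ℝ} {b : ℝ}
    (hw0 : ∀ k ∈ s, 0 ≤ w k) (hw1 : ∑ k ∈ s, w k ≤ 1) (hb : 0 ≤ b) (ha : ∀ k ∈ s, a k ≤ b) :
    ∑ k ∈ s, w k * a k ≤ b :=
  calc ∑ k ∈ s, w k * a k ≤ ∑ k ∈ s, w k * b :=
        sum_le_sum fun k hk => mul_le_mul_of_nonneg_left (ha k hk) (hw0 k hk)
    _ = (∑ k ∈ s, w k) * b := (sum_mul ..).symm
    _ ≤ b := mul_le_of_le_one_left hb hw1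

section Mpart

variable {m : ℕ → ℝ}

lemma Mpart_nonneg (hm : ∀ k, 0 ≤ m k) (n : ℕ) : 0 ≤ Mpart m n :=
  sum_nonneg fun k _ => hm k

lemma le_Mpart (hm : ∀ k, 0 ≤ m k) {n k : ℕ} (hk : k ∈ Icc 1 n) : m k ≤ Mpart m n :=
  single_le_sum (fun j _ => hm j) hk

lemma div_Mpart_le_one (hm : ∀ k, 0 ≤ m k) {n k : ℕ} (hk : k ∈ Icc 1 n) :
    m k / Mpart m n ≤ 1 :=
  div_le_one_of_le₀ (le_Mpart hm hk) (Mpart_nonneg hm n)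

lemma sum_div_Mpart_le_one (m : ℕ → ℝ) (n : ℕ) : ∑ k ∈ Icc 1 n, m k / Mpart m n ≤ 1 := by
  rw [← sum_div]
  exact div_self_le_one _

theorem tendsto_sum_sq_div_Mpart_mul (hm : ∀ k, 0 ≤ m k) (hdiv : Tendsto (Mpart m) atTop atTop)
    {a : ℕ → ℝ} {C : ℝ} (ha0 : ∀ k, 0 ≤ a k) (haC : ∀ k, a k ≤ C)
    (hsmall : ∀ η > 0, ∃ M₀ : ℝ, ∀ k, M₀ ≤ m k → a k ≤ η) :
    Tendsto (fun n => ∑ k ∈ Icc 1 n, (m k / Mpart m n) ^ 2 * a k) atTop (𝓝 0) := by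
  have hC : 0 ≤ C := (ha0 0).trans (haC 0)
  refine tendsto_zero_of_forall_le_add
    (fun n => sum_nonneg fun k _ => mul_nonneg (sq_nonneg _) (ha0 k)) fun η hη => ?_
  obtain ⟨M₀, hM₀⟩ := hsmall η hη
  set M₁ := max M₀ 0
  refine ⟨fun n => M₁ * C / Mpart m n, by simpa using tendsto_const_nhds.div_atTop hdiv,
    fun n => ?_⟩
  have hg : 0 ≤ M₁ * C / Mpart m n :=
    div_nonneg (mul_nonneg (le_max_right _ _) hC) (Mpart_nonneg hm n)
  simp_rw [sq, mul_assoc]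
  refine sum_mul_le_of_sum_le_one (fun k _ => div_nonneg (hm k) (Mpart_nonneg hm n))
    (sum_div_Mpart_le_one m n) (by linarith) fun k hk => ?_
  -- either `a k ≤ η`, or `m k < M₀` and the weight `m k / Mpart m n` itself is small
  rcases le_or_gt M₀ (m k) with hk' | hk'
  · calc m k / Mpart m n * a k ≤ a k := mul_le_of_le_one_left (ha0 k) (div_Mpart_le_one hm hk)
      _ ≤ η + M₁ * C / Mpart m n := by linarith [hM₀ k hk']
  · calc m k / Mpart m n * a k ≤ M₁ / Mpart m n * C :=
          mul_le_mul (div_le_div_of_nonneg_right (hk'.le.trans (le_max_left _ _))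
            (Mpart_nonneg hm n)) (haC k) (ha0 k)
            (div_nonneg (le_max_right _ _) (Mpart_nonneg hm n))
      _ ≤ η + M₁ * C / Mpart m n := by rw [div_mul_eq_mul_div]; linarith

end Mpart

def cutoff (A x : ℝ) : ℝ := if |x| ≤ A then x else 0

lemma measurable_cutoff (A : ℝ) : Measurable (cutoff A) :=
  Measurable.ite (measurableSet_le measurable_abs measurable_const) measurable_id measurable_const

lemma abs_cutoff_le_abs (A x : ℝ) : |cutoff A x| ≤ |x| := by
  unfold cutoff; split_ifs <;> simp

lemma abs_cutoff_le (A x : ℝ) : |cutoff A x| ≤ |A| := by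
  unfold cutoff; split_ifs with h
  · exact h.trans (le_abs_self A)
  · simp

lemma abs_sub_cutoff (A x : ℝ) : |x - cutoff A x| = {y : ℝ | A < |y|}.indicator (|·|) x := by
  unfold cutoff
  by_cases h : |x| ≤ A
  · simp [h, not_lt.2 h]
  · simp [h, not_le.1 h]

lemma cutoff_sq_le_add_indicator (A t x : ℝ) :
    cutoff A x ^ 2 ≤ t ^ 2 + {y : ℝ | t < |y|}.indicator (fun _ => A ^ 2) x := by
  by_cases h : t < |x|
  · rw [Set.indicator_of_mem (show x ∈ {y : ℝ | t < |y|} from h)]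
    nlinarith [sq_le_sq.2 (abs_cutoff_le A x), sq_nonneg t]
  · rw [Set.indicator_of_notMem (show x ∉ {y : ℝ | t < |y|} from h), add_zero]
    exact sq_le_sq.2 ((abs_cutoff_le_abs A x).trans ((not_lt.1 h).trans (le_abs_self t)))

section Truncation

variable {Ω : Type*} [MeasurableSpace Ω] {μ : Measure Ω} {f : Ω → ℝ}

lemma integrable_cutoff_comp (hf : Integrable f μ) (A : ℝ) :
    Integrable (fun ω => cutoff A (f ω)) μ :=
  hf.mono ((measurable_cutoff A).comp_aemeasurable hf.aemeasurable).aestronglyMeasurable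
    (ae_of_all _ fun ω => by simpa only [Real.norm_eq_abs] using abs_cutoff_le_abs A (f ω))

lemma memLp_cutoff_comp [IsFiniteMeasure μ] (hf : AEMeasurable f μ) (A : ℝ) (p : ℝ≥0∞) :
    MemLp (fun ω => cutoff A (f ω)) p μ :=
  MemLp.of_bound ((measurable_cutoff A).comp_aemeasurable hf).aestronglyMeasurable |A|
    (ae_of_all _ fun ω => by simpa only [Real.norm_eq_abs] using abs_cutoff_le A (f ω))

lemma integral_abs_sub_cutoff (hf : Measurable f) (A : ℝ) :
    ∫ ω, |f ω - cutoff A (f ω)| ∂μ = ∫ ω in {ω | A < |f ω|}, |f ω| ∂μ := by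
  rw [← integral_indicator (measurableSet_lt measurable_const hf.abs)]
  congr with ω
  exact abs_sub_cutoff A (f ω)

lemma abs_integral_cutoff_le (hf : Measurable f) (hfi : Integrable f μ) (hf0 : ∫ ω, f ω ∂μ = 0)
    (A : ℝ) : |∫ ω, cutoff A (f ω) ∂μ| ≤ ∫ ω in {ω | A < |f ω|}, |f ω| ∂μ := by
  have hsub : ∫ ω, cutoff A (f ω) ∂μ = -∫ ω, f ω - cutoff A (f ω) ∂μ := by
    rw [integral_sub hfi (integrable_cutoff_comp hfi A), hf0, zero_sub, neg_neg]
  rw [hsub, abs_neg, ← integral_abs_sub_cutoff hf]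
  exact abs_integral_le_integral_abs

lemma integral_cutoff_sq_le [IsProbabilityMeasure μ] (hf : Measurable f) (A t : ℝ) :
    ∫ ω, cutoff A (f ω) ^ 2 ∂μ ≤ t ^ 2 + A ^ 2 * μ.real {ω | t < |f ω|} := by
  have hs : MeasurableSet {ω | t < |f ω|} := measurableSet_lt measurable_const hf.abs
  calc ∫ ω, cutoff A (f ω) ^ 2 ∂μ
      ≤ ∫ ω, t ^ 2 + {ω | t < |f ω|}.indicator (fun _ => A ^ 2) ω ∂μ :=
        integral_mono ((memLp_cutoff_comp hf.aemeasurable A 2).integrable_sq)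
          ((integrable_const _).add ((integrable_const _).indicator hs))
          fun ω => cutoff_sq_le_add_indicator A t (f ω)
    _ = t ^ 2 + A ^ 2 * μ.real {ω | t < |f ω|} := by
        rw [integral_add (integrable_const _) ((integrable_const _).indicator hs),
          integral_indicator_const _ hs]
        simp [mul_comm]

lemma integral_cutoff_sq_le_sq [IsProbabilityMeasure μ] (hf : AEMeasurable f μ) (A : ℝ) :
    ∫ ω, cutoff A (f ω) ^ 2 ∂μ ≤ A ^ 2 := by
  calc ∫ ω, cutoff A (f ω) ^ 2 ∂μ ≤ ∫ _, A ^ 2 ∂μ :=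
        integral_mono ((memLp_cutoff_comp hf A 2).integrable_sq) (integrable_const _)
          fun ω => sq_le_sq.2 (abs_cutoff_le A (f ω))
    _ = A ^ 2 := by simp

lemma exists_forall_integral_cutoff_sq_le [IsProbabilityMeasure μ] {κ : Type*}
    {X : κ → ℝ → Ω → ℝ} (hmeas : ∀ k r, Measurable (X k r))
    (hW1 : ∀ ε > (0:ℝ), ∀ δ > (0:ℝ), ∃ M₀ : ℝ, ∀ r ≥ M₀, ∀ k,
      μ {ω | ε < |X k r ω|} < ENNReal.ofReal δ)
    (A : ℝ) {η : ℝ} (hη : 0 < η) :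
    ∃ M₀ : ℝ, ∀ r ≥ M₀, ∀ k, ∫ ω, cutoff A (X k r ω) ^ 2 ∂μ ≤ η := by
  obtain ⟨M₀, hM₀⟩ := hW1 (Real.sqrt (η / 2)) (by positivity) (η / (2 * (A ^ 2 + 1)))
    (by positivity)
  refine ⟨M₀, fun r hr k => ?_⟩
  have hP : μ.real {ω | Real.sqrt (η / 2) < |X k r ω|} ≤ η / (2 * (A ^ 2 + 1)) :=
    ENNReal.toReal_le_of_le_ofReal (by positivity) (hM₀ r hr k).le
  have hA : A ^ 2 * (η / (2 * (A ^ 2 + 1))) ≤ η / 2 := by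
    rw [mul_div_assoc', div_le_div_iff₀ (by positivity) two_pos]
    nlinarith
  calc ∫ ω, cutoff A (X k r ω) ^ 2 ∂μ
      ≤ Real.sqrt (η / 2) ^ 2 + A ^ 2 * μ.real {ω | Real.sqrt (η / 2) < |X k r ω|} :=
        integral_cutoff_sq_le (hmeas k r) A _
    _ ≤ η / 2 + A ^ 2 * (η / (2 * (A ^ 2 + 1))) := by
        rw [Real.sq_sqrt (by positivity)]
        gcongr
    _ ≤ η := by linarith

end Truncation

section WeightedSum

variable {Ω : Type*} [MeasurableSpace Ω] {μ : Measure Ω}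

lemma measureReal_lt_abs_add_le [IsFiniteMeasure μ] (f g : Ω → ℝ) (ε : ℝ) :
    μ.real {ω | ε < |f ω + g ω|} ≤ μ.real {ω | ε / 2 ≤ |f ω|} + μ.real {ω | ε / 2 ≤ |g ω|} := by
  refine (measureReal_mono fun ω hω => ?_).trans (measureReal_union_le _ _)
  by_contra h
  simp only [Set.mem_union, Set.mem_ofPred_eq, not_or, not_le] at hω h
  linarith [abs_add_le (f ω) (g ω)]

lemma measureReal_le_abs_le_variance_div_sq [IsFiniteMeasure μ] {X : Ω → ℝ} (hX : MemLp X 2 μ)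
    {c : ℝ} (hc : 0 < c) (hmean : |∫ ω, X ω ∂μ| ≤ c) :
    μ.real {ω | 2 * c ≤ |X ω|} ≤ variance X μ / c ^ 2 := by
  have hsub : {ω | 2 * c ≤ |X ω|} ⊆ {ω | c ≤ |X ω - ∫ ω, X ω ∂μ|} :=
    fun ω (hω : 2 * c ≤ |X ω|) => show c ≤ |X ω - ∫ ω, X ω ∂μ| by
    linarith [abs_sub_abs_le_abs_sub (X ω) (∫ ω, X ω ∂μ)]
  exact (measureReal_mono hsub).trans
    (ENNReal.toReal_le_of_le_ofReal (div_nonneg (variance_nonneg _ _) (sq_nonneg c))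
      (meas_ge_le_variance_div_sq hX hc))

lemma variance_sum_mul_le [IsProbabilityMeasure μ] {ι : Type*} {Y : ι → Ω → ℝ}
    (hind : iIndepFun Y μ) {s : Finset ι} (hY : ∀ k ∈ s, MemLp (Y k) 2 μ) (w : ι → ℝ) :
    variance (fun ω => ∑ k ∈ s, w k * Y k ω) μ ≤ ∑ k ∈ s, w k ^ 2 * ∫ ω, Y k ω ^ 2 ∂μ := by
  have hwY : iIndepFun (fun k ω => w k * Y k ω) μ :=
    hind.comp (fun k x => w k * x) fun k => measurable_const.mul measurable_id
  have hsum : (fun ω => ∑ k ∈ s, w k * Y k ω) = ∑ k ∈ s, fun ω => w k * Y k ω := by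
    ext ω; simp
  rw [hsum, IndepFun.variance_sum (fun k hk => (hY k hk).const_mul (w k))
    fun i _ j _ hij => hwY.indepFun hij]
  refine sum_le_sum fun k hk => ?_
  rw [variance_const_mul]
  exact mul_le_mul_of_nonneg_left
    (variance_le_expectation_sq (hY k hk).aestronglyMeasurable) (sq_nonneg _)

theorem measureReal_lt_abs_sum_mul_le [IsProbabilityMeasure μ] {ι : Type*} {ξ : ι → Ω → ℝ}
    (hind : iIndepFun ξ μ) {s : Finset ι} (hmeas : ∀ k ∈ s, Measurable (ξ k))
    (hint : ∀ k ∈ s, Integrable (ξ k) μ) (hmean : ∀ k ∈ s, ∫ ω, ξ k ω ∂μ = 0)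
    {w : ι → ℝ} (hw0 : ∀ k ∈ s, 0 ≤ w k) (hw1 : ∑ k ∈ s, w k ≤ 1)
    {A η ε : ℝ} (hε : 0 < ε) (hη : 0 ≤ η) (hηε : 4 * η ≤ ε)
    (htail : ∀ k ∈ s, ∫ ω in {ω | A < |ξ k ω|}, |ξ k ω| ∂μ ≤ η) :
    μ.real {ω | ε < |∑ k ∈ s, w k * ξ k ω|}
      ≤ 2 * η / ε + 16 / ε ^ 2 * ∑ k ∈ s, w k ^ 2 * ∫ ω, cutoff A (ξ k ω) ^ 2 ∂μ := by
  set T := fun ω => ∑ k ∈ s, w k * cutoff A (ξ k ω)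
  set U := fun ω => ∑ k ∈ s, w k * (ξ k ω - cutoff A (ξ k ω))
  have hsplit : ∀ ω, ∑ k ∈ s, w k * ξ k ω = T ω + U ω := fun ω => by
    simp only [T, U, ← sum_add_distrib, mul_sub, add_sub_cancel]
  have hU : μ.real {ω | ε / 2 ≤ |U ω|} ≤ 2 * η / ε := by
    have hZ : ∀ k ∈ s, Integrable (fun ω => ξ k ω - cutoff A (ξ k ω)) μ := fun k hk =>
      (hint k hk).sub (integrable_cutoff_comp (hint k hk) A)
    have hUi : Integrable U μ := integrable_finsetSum _ fun k hk => (hZ k hk).const_mul _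
    have hUint : ∫ ω, |U ω| ∂μ ≤ η := calc
      ∫ ω, |U ω| ∂μ ≤ ∫ ω, ∑ k ∈ s, w k * |ξ k ω - cutoff A (ξ k ω)| ∂μ := by
        refine integral_mono hUi.abs
          (integrable_finsetSum _ fun k hk => (hZ k hk).abs.const_mul _) fun ω => ?_
        refine (abs_sum_le_sum_abs _ _).trans_eq (sum_congr rfl fun k hk => ?_)
        rw [abs_mul, abs_of_nonneg (hw0 k hk)]
      _ = ∑ k ∈ s, w k * ∫ ω in {ω | A < |ξ k ω|}, |ξ k ω| ∂μ := by
        rw [integral_finsetSum _ fun k hk => (hZ k hk).abs.const_mul _]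
        refine sum_congr rfl fun k hk => ?_
        rw [integral_const_mul, integral_abs_sub_cutoff (hmeas k hk)]
      _ ≤ η := sum_mul_le_of_sum_le_one hw0 hw1 hη htail
    have hmarkov := mul_meas_ge_le_integral_of_nonneg (ae_of_all μ fun ω => abs_nonneg (U ω))
      hUi.abs (ε / 2)
    rw [le_div_iff₀ hε]
    linarith
  have hT : μ.real {ω | ε / 2 ≤ |T ω|}
      ≤ 16 / ε ^ 2 * ∑ k ∈ s, w k ^ 2 * ∫ ω, cutoff A (ξ k ω) ^ 2 ∂μ := by
    have hY : ∀ k ∈ s, MemLp (fun ω => cutoff A (ξ k ω)) 2 μ :=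
      fun k hk => memLp_cutoff_comp (hmeas k hk).aemeasurable A 2
    have hTmem : MemLp T 2 μ := memLp_finsetSum s fun k hk => (hY k hk).const_mul (w k)
    have hTmean : |∫ ω, T ω ∂μ| ≤ ε / 4 := calc
      |∫ ω, T ω ∂μ| = |∑ k ∈ s, w k * ∫ ω, cutoff A (ξ k ω) ∂μ| := by
        rw [integral_finsetSum _ fun k hk => (integrable_cutoff_comp (hint k hk) A).const_mul _]
        simp only [integral_const_mul]
      _ ≤ ∑ k ∈ s, w k * |∫ ω, cutoff A (ξ k ω) ∂μ| := by
        refine (abs_sum_le_sum_abs _ _).trans_eq (sum_congr rfl fun k hk => ?_)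
        rw [abs_mul, abs_of_nonneg (hw0 k hk)]
      _ ≤ η := sum_mul_le_of_sum_le_one hw0 hw1 hη fun k hk =>
        (abs_integral_cutoff_le (hmeas k hk) (hint k hk) (hmean k hk) A).trans (htail k hk)
      _ ≤ ε / 4 := by linarith
    have hcheb := measureReal_le_abs_le_variance_div_sq hTmem (by positivity) hTmean
    have hvar := variance_sum_mul_le (hind.comp (fun _ => cutoff A) fun _ => measurable_cutoff A)
      hY w
    calc μ.real {ω | ε / 2 ≤ |T ω|} = μ.real {ω | 2 * (ε / 4) ≤ |T ω|} := by ring_nf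
      _ ≤ variance T μ / (ε / 4) ^ 2 := hcheb
      _ = 16 / ε ^ 2 * variance T μ := by ring
      _ ≤ _ := by gcongr; exact hvar
  calc μ.real {ω | ε < |∑ k ∈ s, w k * ξ k ω|}
      = μ.real {ω | ε < |T ω + U ω|} := by simp only [hsplit]
    _ ≤ μ.real {ω | ε / 2 ≤ |T ω|} + μ.real {ω | ε / 2 ≤ |U ω|} :=
        measureReal_lt_abs_add_le T U ε
    _ ≤ _ := by linarith

end WeightedSum

/-- Weak law of large numbers for incremental sums. -/
theorem weak_lln_incremental
    {Ω : Type*} [MeasureSpace Ω] [IsProbabilityMeasure (ℙ : Measure Ω)]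
    (X : ℕ → ℝ → Ω → ℝ)
    (hmeas : ∀ k m, Measurable (X k m))
    (hint : ∀ k m, 0 < m → Integrable (X k m) ℙ)
    (hInd : ∀ f : ℕ → ℝ, iIndepFun (fun k => X k (f k)) ℙ)
    (hC : ∀ k m, 0 < m → ∫ ω, X k m ω ∂ℙ = 0)
    (hW1 : ∀ ε > (0:ℝ), ∀ δ > (0:ℝ), ∃ M₀ : ℝ, ∀ m ≥ M₀, ∀ k,
      ℙ {ω | ε < |X k m ω|} < ENNReal.ofReal δ)
    (hW2 : ∀ δ > (0:ℝ), ∃ A : ℝ, ∀ k m, 0 < m →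
      ∫ ω in {ω | A < |X k m ω|}, |X k m ω| ∂ℙ < δ)
    (m : ℕ → ℝ) (hm : ∀ k, 0 < m k)
    (hdiv : Tendsto (Mpart m) atTop atTop) :
    ∀ ε > (0:ℝ), Tendsto
      (fun n => ℙ {ω | ε < |∑ k ∈ Finset.Icc 1 n, (m k / Mpart m n) * X k (m k) ω|})
      atTop (𝓝 0) := by
  intro ε hε
  have hsecond : ∀ A, Tendsto (fun n => 16 / ε ^ 2 *
      ∑ k ∈ Icc 1 n, (m k / Mpart m n) ^ 2 * ∫ ω, cutoff A (X k (m k) ω) ^ 2) atTop (𝓝 0) :=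
    fun A => by
      simpa using (tendsto_sum_sq_div_Mpart_mul (fun k => (hm k).le) hdiv
        (fun k => integral_nonneg fun ω => sq_nonneg _)
        (fun k => integral_cutoff_sq_le_sq (hmeas k (m k)).aemeasurable A)
        fun η hη => (exists_forall_integral_cutoff_sq_le hmeas hW1 A hη).imp
          fun M₀ hM₀ k hk => hM₀ (m k) hk k).const_mul (16 / ε ^ 2)
  rw [← ENNReal.tendsto_toReal_iff (fun n => measure_ne_top _ _) ENNReal.zero_ne_top,
    ENNReal.toReal_zero]
  refine tendsto_zero_of_forall_le_add (fun n => ENNReal.toReal_nonneg) fun δ hδ => ?_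
  set η := min (ε * δ / 2) (ε / 4)
  obtain ⟨A, hA⟩ := hW2 η (by positivity)
  refine ⟨_, hsecond A, fun n => ?_⟩
  have hηδ : 2 * η / ε ≤ δ := by
    rw [div_le_iff₀ hε]
    linarith [min_le_left (ε * δ / 2) (ε / 4)]
  calc (ℙ {ω | ε < |∑ k ∈ Icc 1 n, m k / Mpart m n * X k (m k) ω|}).toReal
      ≤ 2 * η / ε + 16 / ε ^ 2 *
          ∑ k ∈ Icc 1 n, (m k / Mpart m n) ^ 2 * ∫ ω, cutoff A (X k (m k) ω) ^ 2 :=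
        measureReal_lt_abs_sum_mul_le (hInd m) (fun k _ => hmeas k (m k))
          (fun k _ => hint k (m k) (hm k)) (fun k _ => hC k (m k) (hm k))
          (fun k _ => div_nonneg (hm k).le (Mpart_nonneg (fun k => (hm k).le) n))
          (sum_div_Mpart_le_one m n) hε (by positivity)
          (by linarith [min_le_right (ε * δ / 2) (ε / 4)]) fun k _ => (hA k (m k) (hm k)).le
    _ ≤ δ + _ := by gcongr
end
end

section
/- (Near-optimality of polynomial decay.) Let U_k be i.i.d. uniform random variables on (0,1) and define X_k(m) = 1 if U_k ∈ (0, 1/(2 log₂ m)), X_k(m) = −1 if U_k ∈ [1/(2 log₂ m), 1/log₂ m), and 0 otherwise (for m > 2). With masses m_k = 4^k, we have P(|X_k(m_k)| = 1) = 1/(2k), and hence almost surely |X_k(m_k)| = 1 for infinitely many k; consequently the weighted sums S_n = ∑_{k=1}^n (m_k/M_n) X_k(m_k) do not converge almost surely. -/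
open MeasureTheory ProbabilityTheory Filter
open scoped ENNReal Topology BigOperators

noncomputable section

/-- The masses `m_k = 4^k`. -/
def mseq (k : ℕ) : ℝ := 4 ^ k

/-!
Since `log₂ 4^k = 2k`, `|X_k(m_k)| = 1` exactly when `U_k < 1/(2k)`. These events are
independent and their probabilities `1/(2k)` have a divergent sum, so by the second
Borel–Cantelli lemma they occur infinitely often almost surely; as their probabilities tend
to `0`, their complements, on which `X_k(m_k) = 0`, also occur infinitely often almost surely.

On the other hand `m_{n+1} X_{n+1} = M_{n+1} S_{n+1} - M_n S_n` and `M_n / m_{n+1} → 1/3`, so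
`S_n → L` would force `X_n(m_n) → (1 + 1/3) L - L/3 = L`, which is impossible for a sequence
that is infinitely often `±1` and infinitely often `0`.
-/

open Set

lemma Mpart_succ (m : ℕ → ℝ) (n : ℕ) : Mpart m (n + 1) = Mpart m n + m (n + 1) :=
  Finset.sum_Icc_succ_top (by omega) m

section WeightedAverage

variable {m : ℕ → ℝ}

lemma weightedAverage_mul_Mpart (hm : ∀ k, 0 < m k) (y : ℕ → ℝ) (n : ℕ) :
    (∑ k ∈ Finset.Icc 1 n, (m k / Mpart m n) * y k) * Mpart m n =
      ∑ k ∈ Finset.Icc 1 n, m k * y k := by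
  rcases Nat.eq_zero_or_pos n with rfl | hn
  · simp [Mpart]
  · have hM : Mpart m n ≠ 0 := (Finset.sum_pos (fun k _ => hm k) (Finset.nonempty_Icc.2 hn)).ne'
    rw [Finset.sum_mul]
    refine Finset.sum_congr rfl fun k _ => ?_
    field_simp

lemma tendsto_of_tendsto_weightedAverage {y : ℕ → ℝ} {c L : ℝ} (hm : ∀ k, 0 < m k)
    (hc : Tendsto (fun n => Mpart m n / m (n + 1)) atTop (𝓝 c))
    (hS : Tendsto (fun n => ∑ k ∈ Finset.Icc 1 n, (m k / Mpart m n) * y k) atTop (𝓝 L)) :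
    Tendsto y atTop (𝓝 L) := by
  set S := fun n => ∑ k ∈ Finset.Icc 1 n, (m k / Mpart m n) * y k
  have hincrement : ∀ n, S (n + 1) * (1 + Mpart m n / m (n + 1)) - S n * (Mpart m n / m (n + 1))
      = y (n + 1) := by
    intro n
    have hA : S (n + 1) * Mpart m (n + 1) = _ := weightedAverage_mul_Mpart hm y (n + 1)
    rw [Finset.sum_Icc_succ_top (by omega), ← weightedAverage_mul_Mpart hm y n, Mpart_succ] at hA
    have hmn := (hm (n + 1)).ne'
    field_simp
    linear_combination hA
  have hlim := ((hS.comp (tendsto_add_atTop_nat 1)).mul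
    ((tendsto_const_nhds (x := (1 : ℝ))).add hc)).sub (hS.mul hc)
  rw [show L * (1 + c) - L * c = L by ring] at hlim
  exact (tendsto_add_atTop_iff_nat 1).1 (hlim.congr hincrement)

end WeightedAverage

lemma logb_two_mseq (k : ℕ) : Real.logb 2 (mseq k) = 2 * k := by
  rw [mseq, show (4 : ℝ) = 2 ^ 2 by norm_num, ← pow_mul, Real.logb_pow,
    Real.logb_self_eq_one one_lt_two]
  push_cast
  ring

lemma Mpart_mseq (n : ℕ) : Mpart mseq n = (4 ^ (n + 1) - 4) / 3 := by
  induction n with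
  | zero => simp [Mpart]
  | succ n ih => rw [Mpart_succ, ih, mseq]; ring

lemma tendsto_Mpart_mseq_div_mseq_succ :
    Tendsto (fun n => Mpart mseq n / mseq (n + 1)) atTop (𝓝 (1 / 3)) := by
  have hformula : ∀ n, Mpart mseq n / mseq (n + 1) = 1 / 3 - 1 / 3 * (1 / 4) ^ n := by
    intro n
    rw [Mpart_mseq, mseq, one_div_pow]
    field_simp
    ring
  simp_rw [hformula]
  simpa using tendsto_const_nhds.sub
    ((tendsto_pow_atTop_nhds_zero_of_lt_one (by norm_num) (by norm_num : (1 / 4 : ℝ) < 1)).const_mul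
      (1 / 3 : ℝ))

lemma not_tendsto_of_frequently_abs_eq_one_of_frequently_eq_zero {α : Type*} {l : Filter α}
    {y : α → ℝ} (h₁ : ∃ᶠ a in l, |y a| = 1) (h₀ : ∃ᶠ a in l, y a = 0) (L : ℝ) :
    ¬ Tendsto y l (𝓝 L) := by
  intro hy
  have hL₀ : L = 0 := tendsto_nhds_unique_of_frequently_eq hy tendsto_const_nhds h₀
  have hL₁ : |L| = 1 := tendsto_nhds_unique_of_frequently_eq hy.abs tendsto_const_nhds h₁
  simp [hL₀] at hL₁

-- `X_k(m) = spike (log₂ m) (U_k)`.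
def spike (c u : ℝ) : ℝ :=
  if u ∈ Ioo 0 (1 / (2 * c)) then 1 else if u ∈ Ico (1 / (2 * c)) (1 / c) then -1 else 0

lemma abs_spike_eq_one_iff (c u : ℝ) : |spike c u| = 1 ↔ u ∈ Ioo 0 (1 / c) := by
  have hpos_of_lt : 1 / (2 * c) < 1 / c → 0 < c := by
    contrapose!
    intro hc
    rcases hc.lt_or_eq with hc | rfl
    · exact (one_div_lt_one_div_of_neg_of_lt (by linarith) (by linarith)).le
    · simp
  unfold spike
  split_ifs with h₁ h₂
  · have hc : 0 < c := by linarith [one_div_pos.1 (h₁.1.trans h₁.2)]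
    simp only [abs_one, true_iff]
    exact ⟨h₁.1, h₁.2.trans (one_div_lt_one_div_of_lt hc (by linarith : c < 2 * c))⟩
  · have hc := hpos_of_lt (h₂.1.trans_lt h₂.2)
    simp only [abs_neg, abs_one, true_iff]
    exact ⟨(by positivity : (0 : ℝ) < 1 / (2 * c)).trans_le h₂.1, h₂.2⟩
  · simp only [abs_zero, zero_ne_one, false_iff, mem_Ioo, not_and]
    intro hu₀ hu₁
    by_cases hu : u < 1 / (2 * c)
    · exact h₁ ⟨hu₀, hu⟩
    · exact h₂ ⟨not_lt.1 hu, hu₁⟩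

lemma spike_eq_zero_of_abs_ne_one {c u : ℝ} (h : |spike c u| ≠ 1) : spike c u = 0 := by
  unfold spike at *
  split_ifs at * <;> simp_all

section Probability

variable {Ω : Type*} [MeasurableSpace Ω] {μ : Measure Ω}

lemma measure_preimage_Ioo_zero {V : Ω → ℝ} (hV : Measurable V)
    (hd : μ.map V = volume.restrict (Ioo 0 1)) {c : ℝ} (hc : c ≤ 1) :
    μ (V ⁻¹' Ioo 0 c) = ENNReal.ofReal c := by
  rw [← Measure.map_apply hV measurableSet_Ioo, hd, Measure.restrict_apply measurableSet_Ioo,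
    inter_eq_left.2 (Ioo_subset_Ioo_right hc), Real.volume_Ioo, sub_zero]

lemma ProbabilityTheory.iIndepFun.iIndepSet_preimage {ι β : Type*} [MeasurableSpace β]
    {f : ι → Ω → β} (hf : iIndepFun f μ) (hfm : ∀ i, Measurable (f i)) {B : ι → Set β}
    (hB : ∀ i, MeasurableSet (B i)) : iIndepSet (fun i => f i ⁻¹' B i) μ := by
  rw [iIndepSet_iff_meas_biInter fun i => hfm i (hB i)]
  exact fun s => hf.meas_biInter fun i _ => ⟨B i, hB i, rfl⟩

lemma ae_frequently_mem_of_iIndepSet {s : ℕ → Set Ω} (hsm : ∀ n, MeasurableSet (s n))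
    (hs : iIndepSet s μ) (hsum : ∑' n, μ (s n) = ∞) : ∀ᵐ ω ∂μ, ∃ᶠ n in atTop, ω ∈ s n := by
  have := hs.isProbabilityMeasure
  have hlimsup : ∀ᵐ ω ∂μ, ω ∈ limsup s atTop :=
    (ae_iff_measure_eq (p := (· ∈ limsup s atTop))
      (MeasurableSet.measurableSet_limsup hsm).nullMeasurableSet).2
      (by rw [measure_univ]; exact measure_limsup_eq_one hsm hs hsum)
  filter_upwards [hlimsup] with ω hω using mem_limsup_iff_frequently_mem.1 hω

lemma ae_frequently_not_mem_of_tendsto_measure_zero {s : ℕ → Set Ω}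
    (h : Tendsto (fun n => μ (s n)) atTop (𝓝 0)) : ∀ᵐ ω ∂μ, ∃ᶠ n in atTop, ω ∉ s n := by
  have hset : {ω | ¬ ∃ᶠ n in atTop, ω ∉ s n} = ⋃ N, ⋂ n ≥ N, s n := by
    ext ω
    simp [Filter.not_frequently, eventually_atTop]
  rw [ae_iff, hset, measure_iUnion_null_iff]
  intro N
  refine nonpos_iff_eq_zero.1 (ge_of_tendsto h ?_)
  filter_upwards [eventually_ge_atTop N] with n hn
  exact measure_mono (biInter_subset_of_mem hn)

end Probability

lemma one_div_two_mul_natCast_le_one (k : ℕ) : 1 / (2 * (k : ℝ)) ≤ 1 := by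
  rcases k.eq_zero_or_pos with rfl | hk
  · simp
  · rw [div_le_one (by positivity)]
    have : (1 : ℝ) ≤ k := by exact_mod_cast hk
    linarith

lemma tsum_ofReal_one_div_two_mul_natCast :
    ∑' k : ℕ, ENNReal.ofReal (1 / (2 * k)) = ∞ := by
  by_contra h
  have hsum := ENNReal.summable_toReal h
  have hreal : (fun k : ℕ => (ENNReal.ofReal (1 / (2 * k))).toReal) =
      fun k : ℕ => 1 / 2 * (1 / (k : ℝ)) :=
    funext fun k => by rw [ENNReal.toReal_ofReal (by positivity)]; ring
  rw [hreal, summable_mul_left_iff (by norm_num)] at hsum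
  exact Real.not_summable_one_div_natCast hsum

lemma tendsto_ofReal_one_div_two_mul_natCast :
    Tendsto (fun k : ℕ => ENNReal.ofReal (1 / (2 * k))) atTop (𝓝 0) := by
  rw [← ENNReal.ofReal_zero]
  refine ENNReal.tendsto_ofReal ?_
  simpa using (tendsto_inv_atTop_zero.comp tendsto_natCast_atTop_atTop).mul_const (2⁻¹ : ℝ)

theorem near_optimality_S1_general
    {Ω : Type*} [MeasureSpace Ω]
    (U : ℕ → Ω → ℝ) (hUm : ∀ k, Measurable (U k))
    (hUd : ∀ k, Measure.map (U k) ℙ = volume.restrict (Set.Ioo (0:ℝ) 1))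
    (hUi : iIndepFun U ℙ)
    (X : ℕ → ℝ → Ω → ℝ)
    (hX : ∀ k m ω, X k m ω =
      if U k ω ∈ Set.Ioo (0:ℝ) (1 / (2 * Real.logb 2 m)) then 1
      else if U k ω ∈ Set.Ico (1 / (2 * Real.logb 2 m)) (1 / Real.logb 2 m) then -1
      else 0) :
    (∀ k : ℕ, 1 ≤ k →
      ℙ {ω : Ω | |X k (mseq k) ω| = 1} = ENNReal.ofReal (1 / (2 * k))) ∧
    (∀ᵐ ω ∂ℙ, ∃ᶠ k in atTop, |X k (mseq k) ω| = 1) ∧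
    (∀ᵐ ω ∂ℙ, ¬ ∃ L : ℝ, Tendsto
      (fun n => ∑ k ∈ Finset.Icc 1 n, (mseq k / Mpart mseq n) * X k (mseq k) ω)
      atTop (𝓝 L)) := by
  have hXspike : ∀ k ω, X k (mseq k) ω = spike (2 * k) (U k ω) := by
    intro k ω
    rw [hX, logb_two_mseq]
    rfl
  have hevent : ∀ k ω, |X k (mseq k) ω| = 1 ↔ U k ω ∈ Ioo 0 (1 / (2 * (k : ℝ))) :=
    fun k ω => by rw [hXspike, abs_spike_eq_one_iff]
  have hprob : ∀ k : ℕ,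
      ℙ (U k ⁻¹' Ioo 0 (1 / (2 * (k : ℝ)))) = ENNReal.ofReal (1 / (2 * k)) :=
    fun k => measure_preimage_Ioo_zero (hUm k) (hUd k) (one_div_two_mul_natCast_le_one k)
  have hinfinitelyOften : ∀ᵐ ω ∂ℙ, ∃ᶠ k in atTop, |X k (mseq k) ω| = 1 := by
    have hsum : ∑' k : ℕ, ℙ (U k ⁻¹' Ioo 0 (1 / (2 * (k : ℝ)))) = ∞ := by
      simp_rw [hprob]
      exact tsum_ofReal_one_div_two_mul_natCast
    filter_upwards [ae_frequently_mem_of_iIndepSet (fun k => hUm k measurableSet_Ioo)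
      (hUi.iIndepSet_preimage hUm fun _ => measurableSet_Ioo) hsum] with ω hω
    simpa only [hevent, mem_preimage] using hω
  have hzeroInfinitelyOften : ∀ᵐ ω ∂ℙ, ∃ᶠ k in atTop, X k (mseq k) ω = 0 := by
    have hlim : Tendsto (fun k : ℕ => ℙ (U k ⁻¹' Ioo 0 (1 / (2 * (k : ℝ))))) atTop (𝓝 0) := by
      simp_rw [hprob]
      exact tendsto_ofReal_one_div_two_mul_natCast
    filter_upwards [ae_frequently_not_mem_of_tendsto_measure_zero hlim] with ω hω
    refine hω.mono fun k hk => ?_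
    rw [hXspike]
    exact spike_eq_zero_of_abs_ne_one ((abs_spike_eq_one_iff _ _).not.2 hk)
  refine ⟨fun k _ => by simp_rw [hevent]; exact hprob k, hinfinitelyOften, ?_⟩
  filter_upwards [hinfinitelyOften, hzeroInfinitelyOften] with ω h₁ h₀
  rintro ⟨L, hL⟩
  exact not_tendsto_of_frequently_abs_eq_one_of_frequently_eq_zero h₁ h₀ L
    (tendsto_of_tendsto_weightedAverage (fun k => pow_pos four_pos k)
      tendsto_Mpart_mseq_div_mseq_succ hL)

/-- Near-optimality of the polynomial decay condition (S1): with only logarithmic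
concentration, for masses `m_k = 4^k` one has `P(|X_k(m_k)| = 1) = 1/(2k)`, almost surely
`|X_k(m_k)| = 1` infinitely often, and the incremental sums fail to converge a.s. -/
theorem near_optimality_S1
    {Ω : Type*} [MeasureSpace Ω] [IsProbabilityMeasure (ℙ : Measure Ω)]
    (U : ℕ → Ω → ℝ) (hUm : ∀ k, Measurable (U k))
    (hUd : ∀ k, Measure.map (U k) ℙ = volume.restrict (Set.Ioo (0:ℝ) 1))
    (hUi : iIndepFun U ℙ)
    (X : ℕ → ℝ → Ω → ℝ)
    (hX : ∀ k m ω, X k m ω =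
      if U k ω ∈ Set.Ioo (0:ℝ) (1 / (2 * Real.logb 2 m)) then 1
      else if U k ω ∈ Set.Ico (1 / (2 * Real.logb 2 m)) (1 / Real.logb 2 m) then -1
      else 0) :
    (∀ k : ℕ, 1 ≤ k →
      ℙ {ω : Ω | |X k (mseq k) ω| = 1} = ENNReal.ofReal (1 / (2 * k))) ∧
    (∀ᵐ ω ∂ℙ, ∃ᶠ k in atTop, |X k (mseq k) ω| = 1) ∧
    (∀ᵐ ω ∂ℙ, ¬ ∃ L : ℝ, Tendsto
      (fun n => ∑ k ∈ Finset.Icc 1 n, (mseq k / Mpart mseq n) * X k (mseq k) ω)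
      atTop (𝓝 L)) :=
  near_optimality_S1_general U hUm hUd hUi X hX
end
end

section
/- (L¹ stability of frequencies implies regularity.) Assume the limit A := lim_{t→∞} ℓ_t/t exists in [0,∞]. If F_t → F_* in L¹ (i.e. F_t → F_* weakly and ∫ m dF_t → ∫ m dF_* < ∞) with F_* ≠ δ_0, then A ∈ (0,∞) and μ_t converges weakly to the measure μ_* determined by ⟨μ_*, f⟩ = A ∫ m f(m) dF_*(m) for all continuous bounded f on [0,∞]. -/
open MeasureTheory ProbabilityTheory Filter
open scoped ENNReal Topology BigOperators

noncomputable section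

/-- `ℓ_t = inf {ℓ : M_ℓ ≥ t}`, the index of the increment containing time `t`. -/
def ell (m : ℕ → ℝ) (t : ℝ) : ℕ := sInf {l : ℕ | t ≤ Mpart m l}

/-- `t̄ = t - M_{ℓ_t - 1}`, the elapsed part of the current increment. -/
def tbar (m : ℕ → ℝ) (t : ℝ) : ℝ := t - Mpart m (ell m t - 1)

/-- The empirical mass measure `μ_t = (t̄/t) δ_{t̄} + ∑_{k<ℓ_t} (m_k/t) δ_{m_k}`,
as a measure on `[0,∞]` (modelled by `ℝ≥0∞`). -/
def empMass (m : ℕ → ℝ) (t : ℝ) : Measure ℝ≥0∞ :=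
  ENNReal.ofReal (tbar m t / t) • Measure.dirac (ENNReal.ofReal (tbar m t)) +
  ∑ k ∈ Finset.Icc 1 (ell m t - 1),
    ENNReal.ofReal (m k / t) • Measure.dirac (ENNReal.ofReal (m k))

/-- The empirical mass frequency `F_t = (1/ℓ_t) (δ_{t̄} + ∑_{k<ℓ_t} δ_{m_k})`,
as a measure on `[0,∞]` (modelled by `ℝ≥0∞`). -/
def empFreq (m : ℕ → ℝ) (t : ℝ) : Measure ℝ≥0∞ :=
  ((ell m t : ℝ≥0∞))⁻¹ •
    (Measure.dirac (ENNReal.ofReal (tbar m t)) +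
     ∑ k ∈ Finset.Icc 1 (ell m t - 1), Measure.dirac (ENNReal.ofReal (m k)))

/-!
Since `∫ m dF_t = t / ℓ_t`, convergence of the means forces `ℓ_t / t → (∫ m dF_*)⁻¹`, so
`A = (∫ m dF_*)⁻¹`, which lies in `(0, ∞)` because the mean of `F_*` is finite and, as
`F_* ≠ δ₀`, nonzero. Moreover `μ_t` is the size-biased `F_t` rescaled by `ℓ_t / t`:
`∫ f dμ_t = (ℓ_t / t) ∫ m f(m) dF_t`. It remains to pass to the limit in `∫ m f(m) dF_t`;
truncating `m` at a level `N` gives a continuous integrand, handled by weak convergence, while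
the tail `∫ (m - m ∧ N) dF_t` converges, by weak convergence and convergence of the means, to
the tail of `F_*`, which is small for large `N`.
-/

lemma tendsto_of_forall_exists_dist_lt {ι α : Type*} [PseudoMetricSpace α] {l : Filter ι}
    {a : ι → α} {a₀ : α}
    (h : ∀ ε > 0, ∃ b : ι → α, ∃ b₀, Tendsto b l (𝓝 b₀) ∧ (∀ᶠ i in l, dist (a i) (b i) < ε) ∧
      dist a₀ b₀ < ε) :
    Tendsto a l (𝓝 a₀) := by
  refine Metric.tendsto_nhds.2 fun ε hε => ?_
  obtain ⟨b, b₀, hb, hab, hab₀⟩ := h (ε / 3) (by positivity)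
  filter_upwards [hab, Metric.tendsto_nhds.1 hb (ε / 3) (by positivity)] with i h₁ h₂
  calc dist (a i) a₀ ≤ dist (a i) (b i) + dist (b i) b₀ + dist b₀ a₀ := dist_triangle4 _ _ _ _
    _ < ε := by rw [dist_comm b₀]; linarith

section FirstMoment

variable {ν : Measure ℝ≥0∞}

lemma continuous_toReal_inf {N : ℝ≥0∞} (hN : N ≠ ⊤) : Continuous fun x : ℝ≥0∞ => (x ⊓ N).toReal :=
  ENNReal.continuousOn_toReal.comp_continuous (continuous_id.min continuous_const)
    fun _ => (inf_le_right.trans_lt hN.lt_top).ne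

lemma integrable_toReal_of_le_id (hν : ∫⁻ x, x ∂ν ≠ ⊤) {g : ℝ≥0∞ → ℝ≥0∞} (hg : Measurable g)
    (hg_le : ∀ x, g x ≤ x) : Integrable (fun x => (g x).toReal) ν :=
  integrable_toReal_of_lintegral_ne_top hg.aemeasurable
    (ne_top_of_le_ne_top hν (lintegral_mono hg_le))

lemma dist_integral_toReal_mul_inf_le (hν : ∫⁻ x, x ∂ν ≠ ⊤) {f : ℝ≥0∞ → ℝ}
    (hf : Measurable f) {C : ℝ} (hC : ∀ x, ‖f x‖ ≤ C) (N : ℝ≥0∞) :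
    dist (∫ x, x.toReal * f x ∂ν) (∫ x, (x ⊓ N).toReal * f x ∂ν) ≤
      C * (∫ x, x.toReal ∂ν - ∫ x, (x ⊓ N).toReal ∂ν) := by
  have hid : Integrable (fun x : ℝ≥0∞ => x.toReal) ν :=
    integrable_toReal_of_le_id hν measurable_id fun _ => le_rfl
  have hinf : Integrable (fun x : ℝ≥0∞ => (x ⊓ N).toReal) ν :=
    integrable_toReal_of_le_id hν (measurable_id.min measurable_const) fun _ => inf_le_left
  have hbdd : ∀ᵐ x ∂ν, ‖f x‖ ≤ C := ae_of_all _ hC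
  rw [dist_eq_norm, ← integral_sub (hid.mul_bdd hf.aestronglyMeasurable hbdd)
    (hinf.mul_bdd hf.aestronglyMeasurable hbdd), ← integral_sub hid hinf, ← integral_const_mul]
  refine norm_integral_le_of_norm_le ((hid.sub hinf).const_mul C)
    ((ae_lt_top measurable_id hν).mono fun x hx => ?_)
  have h : 0 ≤ x.toReal - (x ⊓ N).toReal :=
    sub_nonneg.2 (ENNReal.toReal_mono hx.ne inf_le_left)
  rw [← sub_mul, norm_mul, Real.norm_of_nonneg h, mul_comm]
  exact mul_le_mul_of_nonneg_right (hC x) h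

lemma tendsto_integral_toReal_inf_natCast (hν : ∫⁻ x, x ∂ν ≠ ⊤) :
    Tendsto (fun N : ℕ => ∫ x, (x ⊓ N).toReal ∂ν) atTop (𝓝 (∫ x, x.toReal ∂ν)) := by
  refine tendsto_integral_of_dominated_convergence _
    (fun N => (continuous_toReal_inf (ENNReal.natCast_ne_top N)).aestronglyMeasurable)
    (integrable_toReal_of_le_id hν measurable_id fun _ => le_rfl)
    (fun N => (ae_lt_top measurable_id hν).mono fun x hx => ?_)
    ((ae_lt_top measurable_id hν).mono fun x hx => ?_)
  · rw [Real.norm_of_nonneg ENNReal.toReal_nonneg]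
    exact ENNReal.toReal_mono hx.ne inf_le_left
  · obtain ⟨n, hn⟩ := ENNReal.exists_nat_gt (r := x) hx.ne
    refine tendsto_const_nhds.congr' ?_
    filter_upwards [eventually_ge_atTop n] with N hN
    rw [inf_eq_left.2 (hn.le.trans (Nat.mono_cast hN))]

theorem tendsto_integral_toReal_mul_of_tendsto_lintegral {ι : Type*} {l : Filter ι}
    {ν : ι → Measure ℝ≥0∞} {ν₀ : Measure ℝ≥0∞}
    (hweak : ∀ g : ℝ≥0∞ → ℝ, Continuous g →
      Tendsto (fun i => ∫ x, g x ∂ν i) l (𝓝 (∫ x, g x ∂ν₀)))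
    (hmom : Tendsto (fun i => ∫⁻ x, x ∂ν i) l (𝓝 (∫⁻ x, x ∂ν₀))) (hfin : ∫⁻ x, x ∂ν₀ ≠ ⊤)
    {f : ℝ≥0∞ → ℝ} (hf : Continuous f) :
    Tendsto (fun i => ∫ x, x.toReal * f x ∂ν i) l (𝓝 (∫ x, x.toReal * f x ∂ν₀)) := by
  obtain ⟨C, hC⟩ := isCompact_univ.exists_bound_of_continuousOn hf.continuousOn
  replace hC : ∀ x, ‖f x‖ ≤ C := fun x => hC x trivial
  have hfin_ev : ∀ᶠ i in l, ∫⁻ x, x ∂ν i ≠ ⊤ := hmom.eventually_ne hfin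
  have hmom_real : Tendsto (fun i => ∫ x, x.toReal ∂ν i) l (𝓝 (∫ x, x.toReal ∂ν₀)) := by
    have hint : ∀ μ : Measure ℝ≥0∞, ∫⁻ x, x ∂μ ≠ ⊤ → ∫ x, x.toReal ∂μ = (∫⁻ x, x ∂μ).toReal :=
      fun μ hμ => integral_toReal measurable_id.aemeasurable (ae_lt_top measurable_id hμ)
    rw [hint ν₀ hfin]
    refine ((ENNReal.tendsto_toReal hfin).comp hmom).congr' ?_
    filter_upwards [hfin_ev] with i hi using (hint (ν i) hi).symm
  refine tendsto_of_forall_exists_dist_lt fun ε hε => ?_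
  obtain ⟨N, hN⟩ : ∃ N : ℕ, C * (∫ x, x.toReal ∂ν₀ - ∫ x, (x ⊓ N).toReal ∂ν₀) < ε := by
    have h := ((tendsto_const_nhds (x := ∫ x, x.toReal ∂ν₀)).sub
      (tendsto_integral_toReal_inf_natCast hfin)).const_mul C
    rw [sub_self, mul_zero] at h
    exact (h.eventually (gt_mem_nhds hε)).exists
  have htrunc := continuous_toReal_inf (ENNReal.natCast_ne_top N)
  have htail : Tendsto (fun i => C * (∫ x, x.toReal ∂ν i - ∫ x, (x ⊓ N).toReal ∂ν i)) l
      (𝓝 (C * (∫ x, x.toReal ∂ν₀ - ∫ x, (x ⊓ N).toReal ∂ν₀))) :=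
    (hmom_real.sub (hweak _ htrunc)).const_mul C
  refine ⟨_, _, hweak _ (htrunc.mul hf), ?_,
    (dist_integral_toReal_mul_inf_le hfin hf.measurable hC N).trans_lt hN⟩
  filter_upwards [hfin_ev, htail.eventually (gt_mem_nhds hN)] with i hi hi'
  exact (dist_integral_toReal_mul_inf_le hi hf.measurable hC N).trans_lt hi'

lemma lintegral_id_ne_zero_of_ne_dirac [IsProbabilityMeasure ν] (h : ν ≠ Measure.dirac 0) :
    ∫⁻ x, x ∂ν ≠ 0 := by
  contrapose! h
  have hae : (id : ℝ≥0∞ → ℝ≥0∞) =ᵐ[ν] fun _ => 0 := (lintegral_eq_zero_iff measurable_id).1 h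
  simpa using (hasLaw_dirac_of_ae_eq hae).map_eq

end FirstMoment

open Finset

section Increments

variable {m : ℕ → ℝ} {t : ℝ}

lemma Mpart_zero (m : ℕ → ℝ) : Mpart m 0 = 0 := by simp [Mpart]

lemma le_Mpart_ell (hdiv : Tendsto (Mpart m) atTop atTop) (t : ℝ) : t ≤ Mpart m (ell m t) :=
  Nat.sInf_mem (hdiv.eventually (eventually_ge_atTop t)).exists

lemma ell_pos (hdiv : Tendsto (Mpart m) atTop atTop) (ht : 0 < t) : 0 < ell m t := by
  refine Nat.pos_of_ne_zero fun h => ?_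
  have := le_Mpart_ell hdiv t
  rw [h, Mpart_zero] at this
  linarith

lemma Mpart_ell_sub_one_lt (hdiv : Tendsto (Mpart m) atTop atTop) (ht : 0 < t) :
    Mpart m (ell m t - 1) < t :=
  not_le.1 (Nat.notMem_of_lt_sInf (Nat.sub_lt (ell_pos hdiv ht) one_pos))

lemma tbar_pos (hdiv : Tendsto (Mpart m) atTop atTop) (ht : 0 < t) : 0 < tbar m t :=
  sub_pos.2 (Mpart_ell_sub_one_lt hdiv ht)

lemma tbar_add_sum (m : ℕ → ℝ) (t : ℝ) :
    tbar m t + ∑ k ∈ Icc 1 (ell m t - 1), m k = t := by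
  simp [tbar, Mpart]

end Increments

section EmpiricalIntegrals

variable {m : ℕ → ℝ} {t : ℝ}

lemma integral_empFreq (m : ℕ → ℝ) (t : ℝ) (f : ℝ≥0∞ → ℝ) :
    ∫ x, f x ∂empFreq m t = (ell m t : ℝ)⁻¹ *
      (f (ENNReal.ofReal (tbar m t)) + ∑ k ∈ Icc 1 (ell m t - 1), f (ENNReal.ofReal (m k))) := by
  have hdirac : ∀ a, Integrable f (Measure.dirac a) := fun a => integrable_dirac (by simp)
  rw [empFreq, integral_smul_measure, integral_add_measure (hdirac _)
    (integrable_finsetSum_measure.2 fun k _ => hdirac _), integral_finsetSum_measure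
    fun k _ => hdirac _]
  simp [integral_dirac, ENNReal.toReal_inv]

lemma integral_empMass (hm : ∀ k, 0 < m k) (hdiv : Tendsto (Mpart m) atTop atTop) (ht : 0 < t)
    (f : ℝ≥0∞ → ℝ) :
    ∫ x, f x ∂empMass m t = tbar m t / t * f (ENNReal.ofReal (tbar m t)) +
      ∑ k ∈ Icc 1 (ell m t - 1), m k / t * f (ENNReal.ofReal (m k)) := by
  have hdirac : ∀ (c : ℝ) a, Integrable f (ENNReal.ofReal c • Measure.dirac a) := fun c a =>
    (integrable_dirac (by simp)).smul_measure ENNReal.ofReal_ne_top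
  rw [empMass, integral_add_measure (hdirac _ _)
    (integrable_finsetSum_measure.2 fun k _ => hdirac _ _), integral_finsetSum_measure
    fun k _ => hdirac _ _]
  simp only [integral_smul_measure, integral_dirac, smul_eq_mul]
  rw [ENNReal.toReal_ofReal (div_nonneg (tbar_pos hdiv ht).le ht.le)]
  congr 1
  exact sum_congr rfl fun k _ => by rw [ENNReal.toReal_ofReal (div_nonneg (hm k).le ht.le)]

lemma integral_empMass_eq_mul_integral_empFreq (hm : ∀ k, 0 < m k)
    (hdiv : Tendsto (Mpart m) atTop atTop) (ht : 0 < t) (f : ℝ≥0∞ → ℝ) :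
    ∫ x, f x ∂empMass m t = (ell m t : ℝ) / t * ∫ x, x.toReal * f x ∂empFreq m t := by
  have hell : (ell m t : ℝ) ≠ 0 := Nat.cast_ne_zero.2 (ell_pos hdiv ht).ne'
  have hmk : ∀ k ∈ Icc 1 (ell m t - 1),
      (ENNReal.ofReal (m k)).toReal * f (ENNReal.ofReal (m k)) = m k * f (ENNReal.ofReal (m k)) :=
    fun k _ => by rw [ENNReal.toReal_ofReal (hm k).le]
  rw [integral_empMass hm hdiv ht, integral_empFreq, ENNReal.toReal_ofReal (tbar_pos hdiv ht).le,
    sum_congr rfl hmk]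
  simp only [div_mul_eq_mul_div, ← sum_div]
  field_simp

lemma lintegral_id_empFreq (hm : ∀ k, 0 < m k) (hdiv : Tendsto (Mpart m) atTop atTop)
    (ht : 0 < t) : ∫⁻ x, x ∂empFreq m t = ENNReal.ofReal t / ell m t := by
  have hsum : ENNReal.ofReal (tbar m t) + ∑ k ∈ Icc 1 (ell m t - 1), ENNReal.ofReal (m k) =
      ENNReal.ofReal t := by
    rw [← ENNReal.ofReal_sum_of_nonneg fun k _ => (hm k).le,
      ← ENNReal.ofReal_add (tbar_pos hdiv ht).le (sum_nonneg fun k _ => (hm k).le),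
      tbar_add_sum]
  rw [empFreq, lintegral_smul_measure, lintegral_add_measure, lintegral_finsetSum_measure]
  simp only [lintegral_dirac, hsum, smul_eq_mul, ENNReal.div_eq_inv_mul]

lemma tendsto_ofReal_ell_div (hm : ∀ k, 0 < m k) (hdiv : Tendsto (Mpart m) atTop atTop)
    {c : ℝ≥0∞} (hc : Tendsto (fun t => ∫⁻ x, x ∂empFreq m t) atTop (𝓝 c)) :
    Tendsto (fun t => ENNReal.ofReal ((ell m t : ℝ) / t)) atTop (𝓝 c⁻¹) := by
  refine (tendsto_inv_iff.2 hc).congr' ?_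
  filter_upwards [eventually_gt_atTop 0] with t ht
  rw [lintegral_id_empFreq hm hdiv ht, ENNReal.inv_div (.inr ENNReal.ofReal_ne_top)
    (.inr (ENNReal.ofReal_pos.2 ht).ne'), ENNReal.ofReal_div_of_pos ht, ENNReal.ofReal_natCast]

end EmpiricalIntegrals

/-- L¹ stability of the empirical frequencies implies regularity: if `ℓ_t/t → A`,
`F_t → F_*` weakly with convergence of first moments (`L¹`), and `F_* ≠ δ_0`,
then `A ∈ (0,∞)` and `μ_t` converges weakly to `μ_*` with
`⟨μ_*, f⟩ = A ∫ m f(m) dF_*(m)`. -/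
theorem L1_frequency_implies_regular (m : ℕ → ℝ) (hm : ∀ k, 0 < m k)
    (hdiv : Tendsto (Mpart m) atTop atTop)
    (A : ℝ≥0∞)
    (hA : Tendsto (fun t : ℝ => ENNReal.ofReal ((ell m t : ℝ) / t)) atTop (𝓝 A))
    (Fstar : Measure ℝ≥0∞) [IsProbabilityMeasure Fstar]
    (hweak : ∀ f : ℝ≥0∞ → ℝ, Continuous f →
      Tendsto (fun t : ℝ => ∫ x, f x ∂(empFreq m t)) atTop (𝓝 (∫ x, f x ∂Fstar)))
    (hL1 : Tendsto (fun t : ℝ => ∫⁻ x, x ∂(empFreq m t)) atTop (𝓝 (∫⁻ x, x ∂Fstar)))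
    (hfin : ∫⁻ x, x ∂Fstar < ⊤)
    (hne : Fstar ≠ Measure.dirac 0) :
    A ≠ 0 ∧ A ≠ ⊤ ∧
    ∀ f : ℝ≥0∞ → ℝ, Continuous f →
      Tendsto (fun t : ℝ => ∫ x, f x ∂(empMass m t)) atTop
        (𝓝 (A.toReal * ∫ x, x.toReal * f x ∂Fstar)) := by
  have hA_eq : A = (∫⁻ x, x ∂Fstar)⁻¹ :=
    tendsto_nhds_unique hA (tendsto_ofReal_ell_div hm hdiv hL1)
  have hA_top : A ≠ ⊤ := by
    simpa [hA_eq] using lintegral_id_ne_zero_of_ne_dirac hne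
  refine ⟨by simpa [hA_eq] using hfin.ne, hA_top, fun f hf => ?_⟩
  have hscale : Tendsto (fun t : ℝ => (ell m t : ℝ) / t) atTop (𝓝 A.toReal) := by
    refine ((ENNReal.tendsto_toReal hA_top).comp hA).congr' ?_
    filter_upwards [eventually_gt_atTop 0] with t ht
    exact ENNReal.toReal_ofReal (div_nonneg (Nat.cast_nonneg _) ht.le)
  have hmoment := tendsto_integral_toReal_mul_of_tendsto_lintegral hweak hL1 hfin.ne hf
  refine (hscale.mul hmoment).congr' ?_
  filter_upwards [eventually_gt_atTop 0] with t ht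
  exact (integral_empMass_eq_mul_integral_empFreq hm hdiv ht f).symm
end
end

section
/- (Second moment summability for bounded increments.) Let m_k ∈ (0,1] with M_n → ∞ and N(x) = #{k : M_k/m_k ≤ x}. Then for every x, ∑_{k : M_k/m_k ≥ |x|} (m_k/M_k)² ≤ 2 ∫_{|x|}^∞ N(y)/y³ dy. Moreover, if F* is the distribution of |X_*| with E[|X_*|^{1+γ}] < ∞ for some γ ∈ (0,1) and N(y) ≤ C y^{1+γ}, then ∫ x² ∫_{y ≥ |x|} N(y)/y³ dy dF*(x) ≤ (C/(1−γ)) E[|X_*|^{1+γ}] < ∞. -/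
/-!
Since `(M_k/m_k)⁻² = ∫_{M_k/m_k}^∞ 2/y³ dy`, Tonelli turns the sum over `k` into the
integral over `y > |x|` of `2/y³` times the number of indices with `|x| ≤ M_k/m_k < y`,
which is at most `N(y)`. For the second claim, `N(y) ≤ C y^{1+γ}` gives
`∫_t^∞ N(y)/y³ dy ≤ C t^{γ-1}/(1-γ)`, so `x² ∫_{|x|}^∞ N(y)/y³ dy ≤ C/(1-γ) |x|^{1+γ}`;
integrate against the law of `|X_*|`.
-/

open MeasureTheory ProbabilityTheory Filter
open scoped ENNReal Topology BigOperators

noncomputable section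

/-- `N(x) = #{k : M_k / m_k ≤ x}`. -/
def Ncount (m : ℕ → ℝ) (x : ℝ) : ℕ := Set.ncard {k : ℕ | 1 ≤ k ∧ Mpart m k / m k ≤ x}

open Set

theorem lintegral_Ioi_two_div_cube {t : ℝ} (ht : 0 < t) :
    ∫⁻ y in Ioi t, ENNReal.ofReal (2 / y ^ 3) = ENNReal.ofReal (t⁻¹ ^ 2) := by
  have hderiv : ∀ y ∈ Ici t, HasDerivAt (fun y : ℝ => -(y ^ 2)⁻¹) (2 / y ^ 3) y := by
    intro y hy
    have hy0 : y ≠ 0 := (ht.trans_le hy).ne'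
    refine ((hasDerivAt_pow 2 y).fun_inv (pow_ne_zero 2 hy0)).fun_neg.congr_deriv ?_
    field_simp
    ring
  have hnonneg : ∀ y ∈ Ioi t, 0 ≤ 2 / y ^ 3 := fun y hy => by
    have := ht.trans hy; positivity
  have hlim : Tendsto (fun y : ℝ => -(y ^ 2)⁻¹) atTop (𝓝 0) := by
    simpa using (tendsto_inv_atTop_zero.comp (tendsto_pow_atTop (α := ℝ) two_ne_zero)).neg
  rw [← ofReal_integral_eq_lintegral_ofReal
      (integrableOn_Ioi_deriv_of_nonneg' hderiv hnonneg hlim)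
      ((ae_restrict_iff' measurableSet_Ioi).2 (ae_of_all _ hnonneg)),
    integral_Ioi_of_hasDerivAt_of_nonneg' hderiv hnonneg hlim]
  congr 1
  ring

section InverseSquareSum

variable {ι : Type*} [Countable ι] {p : ι → Prop} [DecidablePred p] {r : ι → ℝ}

theorem tsum_ofReal_inv_sq_le_lintegral_encard (hr : ∀ k, p k → 0 < r k) (a : ℝ) :
    ∑' k, ENNReal.ofReal (if p k ∧ a ≤ r k then (r k)⁻¹ ^ 2 else 0) ≤
      ∫⁻ y in Ioi a, {k | p k ∧ r k ≤ y}.encard * ENNReal.ofReal (2 / y ^ 3) := by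
  set w : ℝ → ℝ≥0∞ := fun y => ENNReal.ofReal (2 / y ^ 3)
  let g : ι → ℝ → ℝ≥0∞ := fun k => if p k ∧ a ≤ r k then (Ioi (r k)).indicator w else 0
  have hterm : ∀ k, ENNReal.ofReal (if p k ∧ a ≤ r k then (r k)⁻¹ ^ 2 else 0) =
      ∫⁻ y in Ioi a, g k y := fun k => by
    by_cases hk : p k ∧ a ≤ r k
    · simp only [g, if_pos hk]
      rw [lintegral_indicator measurableSet_Ioi,
        Measure.restrict_restrict measurableSet_Ioi, Ioi_inter_Ioi, sup_eq_left.2 hk.2,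
        lintegral_Ioi_two_div_cube (hr k hk.1)]
    · simp [g, hk]
  have hg : ∀ k, Measurable (g k) := fun k => by
    by_cases hk : p k ∧ a ≤ r k
    · simpa [g, hk] using
        (Measurable.ennreal_ofReal (by fun_prop)).indicator measurableSet_Ioi
    · simpa [g, hk] using measurable_zero
  have hcount : ∀ y, ∑' k, g k y ≤ {k | p k ∧ r k ≤ y}.encard * w y := fun y => by
    rw [← ENNReal.tsum_set_const, tsum_subtype _ fun _ => w y]
    refine ENNReal.tsum_le_tsum fun k => ?_
    by_cases hk : p k ∧ a ≤ r k ∧ r k < y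
    · simp [g, hk, hk.2.2.le]
    · have hg0 : g k y = 0 := by
        simp only [g]
        split_ifs with h
        · exact indicator_of_notMem (fun hy => hk ⟨h.1, h.2, hy⟩) w
        · rfl
      simp [hg0]
  calc _ = ∑' k, ∫⁻ y in Ioi a, g k y := tsum_congr hterm
    _ = ∫⁻ y in Ioi a, ∑' k, g k y := (lintegral_tsum fun k => (hg k).aemeasurable).symm
    _ ≤ _ := lintegral_mono hcount

theorem tsum_inv_sq_le_two_mul_integral_ncard (hr : ∀ k, p k → 0 < r k)
    (hfin : ∀ y, {k | p k ∧ r k ≤ y}.Finite) {a : ℝ} (ha : 0 ≤ a)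
    (hint : IntegrableOn (fun y => ({k | p k ∧ r k ≤ y}.ncard : ℝ) / y ^ 3) (Ioi a)) :
    ∑' k, (if p k ∧ a ≤ r k then (r k)⁻¹ ^ 2 else 0) ≤
      2 * ∫ y in Ioi a, ({k | p k ∧ r k ≤ y}.ncard : ℝ) / y ^ 3 := by
  have hnonneg : ∀ y ∈ Ioi a, 0 ≤ 2 * (({k | p k ∧ r k ≤ y}.ncard : ℝ) / y ^ 3) :=
    fun y hy => by have := ha.trans_lt hy; positivity
  have hrhs : 0 ≤ 2 * ∫ y in Ioi a, ({k | p k ∧ r k ≤ y}.ncard : ℝ) / y ^ 3 := by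
    rw [← integral_const_mul]; exact setIntegral_nonneg measurableSet_Ioi hnonneg
  by_cases hsum : Summable fun k => if p k ∧ a ≤ r k then (r k)⁻¹ ^ 2 else 0
  swap
  · rwa [tsum_eq_zero_of_not_summable hsum]
  rw [← ENNReal.ofReal_le_ofReal_iff hrhs, ENNReal.ofReal_tsum_of_nonneg
      (fun k => by split_ifs <;> positivity) hsum, ← integral_const_mul,
    ofReal_integral_eq_lintegral_ofReal (hint.const_mul 2)
      ((ae_restrict_iff' measurableSet_Ioi).2 (ae_of_all _ hnonneg))]
  refine (tsum_ofReal_inv_sq_le_lintegral_encard hr a).trans_eq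
    (lintegral_congr fun y => ?_)
  rw [← (hfin y).cast_ncard_eq, mul_div_left_comm, ENNReal.ofReal_mul (Nat.cast_nonneg _)]
  simp

end InverseSquareSum

theorem div_cube_le_mul_rpow {a C γ y : ℝ} (hy : 0 < y) (h : a ≤ C * y ^ (1 + γ)) :
    a / y ^ 3 ≤ C * y ^ (γ - 2) := by
  rwa [div_le_iff₀ (by positivity), mul_assoc, ← Real.rpow_natCast, ← Real.rpow_add hy,
    Nat.cast_ofNat, show γ - 2 + 3 = 1 + γ by ring]

theorem integrable_div_cube_of_le_rpow {f : ℝ → ℝ} {C γ : ℝ} (hγ : γ < 1)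
    (hfm : AEStronglyMeasurable f) (hf0 : ∀ y, 0 ≤ f y) (hf1 : ∀ y < 1, f y = 0)
    (hfC : ∀ y ≥ 1, f y ≤ C * y ^ (1 + γ)) :
    Integrable fun y => f y / y ^ 3 := by
  rw [← integrableOn_iff_integrable_of_support_subset (s := Ici 1)
    fun y hy => not_lt.1 fun hy1 => hy (by simp [hf1 y hy1]),
    integrableOn_Ici_iff_integrableOn_Ioi]
  refine ((integrableOn_Ioi_rpow_of_lt (a := γ - 2) (by linarith) one_pos).const_mul C).mono'
    (hfm.div₀ (by fun_prop)).restrict ?_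
  rw [ae_restrict_iff' measurableSet_Ioi]
  refine ae_of_all _ fun y (hy : 1 < y) => ?_
  have hy0 : 0 < y := one_pos.trans hy
  rw [Real.norm_of_nonneg (div_nonneg (hf0 y) (by positivity))]
  exact div_cube_le_mul_rpow hy0 (hfC y hy.le)

theorem sq_mul_setIntegral_Ioi_div_cube_le {f : ℝ → ℝ} {C γ t : ℝ} (hγ : γ < 1) (ht : 0 < t)
    (hf : IntegrableOn (fun y => f y / y ^ 3) (Ioi t)) (hfC : ∀ y > 0, f y ≤ C * y ^ (1 + γ)) :
    t ^ 2 * ∫ y in Ioi t, f y / y ^ 3 ≤ C / (1 - γ) * t ^ (1 + γ) := by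
  have hI : ∫ y in Ioi t, f y / y ^ 3 ≤ C / (1 - γ) * t ^ (γ - 1) := calc
    _ ≤ ∫ y in Ioi t, C * y ^ (γ - 2) :=
      setIntegral_mono_on hf ((integrableOn_Ioi_rpow_of_lt (by linarith) ht).const_mul C)
        measurableSet_Ioi fun y hy => div_cube_le_mul_rpow (ht.trans hy) (hfC y (ht.trans hy))
    _ = C / (1 - γ) * t ^ (γ - 1) := by
      rw [integral_const_mul, integral_Ioi_rpow_of_lt (by linarith) ht,
        show γ - 2 + 1 = γ - 1 by ring, neg_div, ← div_neg, neg_sub]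
      ring
  calc t ^ 2 * ∫ y in Ioi t, f y / y ^ 3 ≤ t ^ 2 * (C / (1 - γ) * t ^ (γ - 1)) :=
        mul_le_mul_of_nonneg_left hI (sq_nonneg t)
    _ = C / (1 - γ) * t ^ (1 + γ) := by
      rw [mul_left_comm, ← Real.rpow_natCast, ← Real.rpow_add ht, Nat.cast_ofNat,
        show (2 : ℝ) + (γ - 1) = 1 + γ by ring]

theorem integral_map_abs_le_of_le_rpow {Ω : Type*} [MeasurableSpace Ω] {μ : Measure Ω}
    {X : Ω → ℝ} (hX : Measurable X) {φ : ℝ → ℝ} {K q : ℝ} (hφ0 : ∀ x, 0 ≤ φ x)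
    (hφ : ∀ x, φ x ≤ K * |x| ^ q) (hint : Integrable (fun ω => |X ω| ^ q) μ) :
    ∫ x, φ x ∂(μ.map fun ω => |X ω|) ≤ K * ∫ ω, |X ω| ^ q ∂μ := by
  have hmeas : AEStronglyMeasurable (fun x : ℝ => K * |x| ^ q) (μ.map fun ω => |X ω|) :=
    (by fun_prop : Measurable fun x : ℝ => K * |x| ^ q).aestronglyMeasurable
  have hbound : Integrable (fun x : ℝ => K * |x| ^ q) (μ.map fun ω => |X ω|) := by
    rw [integrable_map_measure hmeas hX.abs.aemeasurable]
    simpa [Function.comp_def] using hint.const_mul K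
  calc ∫ x, φ x ∂(μ.map fun ω => |X ω|) ≤ ∫ x, K * |x| ^ q ∂(μ.map fun ω => |X ω|) :=
        integral_mono_of_nonneg (ae_of_all _ hφ0) hbound (ae_of_all _ hφ)
    _ = K * ∫ ω, |X ω| ^ q ∂μ := by
      rw [integral_map hX.abs.aemeasurable hmeas, integral_const_mul]
      simp only [abs_abs]

section Ncount

variable {m : ℕ → ℝ}

theorem one_le_Mpart_div (hm : ∀ k, 0 < m k) {k : ℕ} (hk : 1 ≤ k) : 1 ≤ Mpart m k / m k :=
  (one_le_div (hm k)).2 <|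
    Finset.single_le_sum (fun i _ => (hm i).le) (Finset.mem_Icc.2 ⟨hk, le_rfl⟩)

-- `Set.ncard` is `0` on infinite sets: `Ncount` counts honestly only because of this.
theorem finite_setOf_Mpart_div_le (hm : ∀ k, 0 < m k) (hm1 : ∀ k, m k ≤ 1)
    (hdiv : Tendsto (Mpart m) atTop atTop) (y : ℝ) :
    {k | 1 ≤ k ∧ Mpart m k / m k ≤ y}.Finite := by
  have hev := hdiv.eventually_gt_atTop y
  rw [← Nat.cofinite_eq_atTop, eventually_cofinite] at hev
  refine hev.subset fun k hk => not_lt.2 (le_trans ?_ hk.2)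
  exact le_div_self (Finset.sum_nonneg fun i _ => (hm i).le) (hm k) (hm1 k)

theorem monotone_Ncount (hm : ∀ k, 0 < m k) (hm1 : ∀ k, m k ≤ 1)
    (hdiv : Tendsto (Mpart m) atTop atTop) : Monotone (Ncount m) := fun _ y hxy =>
  ncard_le_ncard (fun _ hk => ⟨hk.1, hk.2.trans hxy⟩) (finite_setOf_Mpart_div_le hm hm1 hdiv y)

theorem Ncount_eq_zero_of_lt_one (hm : ∀ k, 0 < m k) {y : ℝ} (hy : y < 1) :
    Ncount m y = 0 := by
  have hempty : {k | 1 ≤ k ∧ Mpart m k / m k ≤ y} = ∅ :=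
    eq_empty_of_forall_notMem fun k hk =>
      (hy.trans_le (one_le_Mpart_div hm hk.1)).not_ge hk.2
  rw [Ncount, hempty, ncard_empty]

end Ncount

theorem second_moment_summability_general
    {Ω : Type*} [MeasureSpace Ω]
    (m : ℕ → ℝ) (hm : ∀ k, 0 < m k) (hm1 : ∀ k, m k ≤ 1)
    (hdiv : Tendsto (Mpart m) atTop atTop)
    (γ C : ℝ) (hγ : γ ∈ Set.Ioo (0:ℝ) 1)
    (hN : ∀ y > (0:ℝ), (Ncount m y : ℝ) ≤ C * y ^ (1 + γ))
    (Xstar : Ω → ℝ) (hXm : Measurable Xstar)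
    (hX : Integrable (fun ω => |Xstar ω| ^ (1 + γ)) ℙ) :
    (∀ x : ℝ,
      (∑' k : ℕ, if 1 ≤ k ∧ |x| ≤ Mpart m k / m k then (m k / Mpart m k) ^ 2 else 0)
        ≤ 2 * ∫ y in Set.Ioi |x|, (Ncount m y : ℝ) / y ^ 3) ∧
    (∫ x, x ^ 2 * (∫ y in Set.Ioi |x|, (Ncount m y : ℝ) / y ^ 3)
        ∂(Measure.map (fun ω => |Xstar ω|) ℙ)
      ≤ (C / (1 - γ)) * ∫ ω, |Xstar ω| ^ (1 + γ) ∂ℙ) := by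
  obtain ⟨hγ0, hγ1⟩ := hγ
  have hint : Integrable fun y => (Ncount m y : ℝ) / y ^ 3 :=
    integrable_div_cube_of_le_rpow hγ1
      (Nat.mono_cast.comp (monotone_Ncount hm hm1 hdiv)).measurable.aestronglyMeasurable
      (fun _ => Nat.cast_nonneg _) (fun y hy => by simp [Ncount_eq_zero_of_lt_one hm hy])
      (fun y hy => hN y (by linarith))
  refine ⟨fun x => ?_, integral_map_abs_le_of_le_rpow hXm (fun x => ?_) (fun x => ?_) hX⟩
  · simpa only [inv_div, Ncount] using tsum_inv_sq_le_two_mul_integral_ncard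
      (fun k hk => one_pos.trans_le (one_le_Mpart_div hm hk))
      (finite_setOf_Mpart_div_le hm hm1 hdiv) (abs_nonneg x) hint.integrableOn
  · exact mul_nonneg (sq_nonneg x) (setIntegral_nonneg measurableSet_Ioi fun y hy => by
      have := (abs_nonneg x).trans_lt hy; positivity)
  · rcases eq_or_ne x 0 with rfl | hx
    · simp [Real.zero_rpow (by linarith : 1 + γ ≠ 0)]
    · simpa only [sq_abs] using
        sq_mul_setIntegral_Ioi_div_cube_le hγ1 (abs_pos.2 hx) hint.integrableOn hN

/-- Second moment summability for bounded increments: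
`∑_{k : M_k/m_k ≥ |x|} (m_k/M_k)² ≤ 2 ∫_{|x|}^∞ N(y)/y³ dy`, and the resulting double
integral against the law `F_*` of `|X_*|` is bounded by `(C/(1−γ)) E[|X_*|^{1+γ}] < ∞`. -/
theorem second_moment_summability
    {Ω : Type*} [MeasureSpace Ω] [IsProbabilityMeasure (ℙ : Measure Ω)]
    (m : ℕ → ℝ) (hm : ∀ k, 0 < m k) (hm1 : ∀ k, m k ≤ 1)
    (hdiv : Tendsto (Mpart m) atTop atTop)
    (γ C : ℝ) (hγ : γ ∈ Set.Ioo (0:ℝ) 1) (hC : 0 < C)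
    (hN : ∀ y > (0:ℝ), (Ncount m y : ℝ) ≤ C * y ^ (1 + γ))
    (Xstar : Ω → ℝ) (hXm : Measurable Xstar)
    (hX : Integrable (fun ω => |Xstar ω| ^ (1 + γ)) ℙ) :
    (∀ x : ℝ,
      (∑' k : ℕ, if 1 ≤ k ∧ |x| ≤ Mpart m k / m k then (m k / Mpart m k) ^ 2 else 0)
        ≤ 2 * ∫ y in Set.Ioi |x|, (Ncount m y : ℝ) / y ^ 3) ∧
    (∫ x, x ^ 2 * (∫ y in Set.Ioi |x|, (Ncount m y : ℝ) / y ^ 3)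
        ∂(Measure.map (fun ω => |Xstar ω|) ℙ)
      ≤ (C / (1 - γ)) * ∫ ω, |Xstar ω| ^ (1 + γ) ∂ℙ) :=
  second_moment_summability_general m hm hm1 hdiv γ C hγ hN Xstar hXm hX
end
end
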